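/- arXiv:2504.15914 — 5 statements merged into one kernel-verified Lean document; each statement's English description precedes it below -/
import Mathlib

section
/- Let U be an m×n real matrix, V a p×n real matrix, and Q a symmetric n×n real matrix. Then there exists a matrix X in R^{m×p} such that Q + Uᵀ X V + Vᵀ Xᵀ U = 0 if and only if both (i) xᵀ Q x = 0 for all x in ker U ∪ ker V, and (ii) ker U ∩ ker V ⊆ ker Q. -/
/-!
Read `Q` as the symmetric bilinear form `q(x, y) = xᵀ Q y` and `X` as a bilinear form `β` on
`ℝᵐ × ℝᵖ`; the equation says `q(x, y) + β(Ux, Vy) + β(Uy, Vx) = 0`. Using generalized inverses of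
`U` and `V`, the forms `b(x, y) = β(Ux, Vy)` are exactly the bilinear forms that vanish when
`x ∈ ker U` or `y ∈ ker V`, so the question is whether `q = b + bᵀ` for such a `b` (then take
`β = -b`). Necessity is immediate. Conversely, split `ℝⁿ = ker U ⊕ B ⊕ D` with
`B ≤ ker V ≤ ker U ⊕ B` and write `x = x₀ + x_B + x_D` accordingly; since `q` vanishes on `ker U`, on `ker V`
and against `ker U ∩ ker V`, the form `b(x, y) = q(x_B + x_D, y) - q(x_D, y_B) - ½ q(x_D, y_D)`
does the job.
-/

open Matrix

theorem exists_le_disjoint_sup_eq {α : Type*} [Lattice α] [BoundedOrder α] [IsModularLattice α]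
    [ComplementedLattice α] (S T : α) : ∃ B ≤ T, Disjoint S B ∧ S ⊔ B = S ⊔ T := by
  obtain ⟨C, hC⟩ := exists_isCompl (S ⊓ T)
  refine ⟨T ⊓ C, inf_le_left, ?_, le_antisymm (sup_le_sup_left inf_le_left _) ?_⟩
  · rw [disjoint_iff, ← inf_assoc]
    exact hC.inf_eq_bot
  · have hT : T = S ⊓ T ⊔ T ⊓ C := by
      rw [inf_comm T C, ← sup_inf_assoc_of_le C inf_le_right, hC.sup_eq_top, top_inf_eq]
    calc S ⊔ T = S ⊔ (S ⊓ T ⊔ T ⊓ C) := by rw [← hT]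
      _ ≤ S ⊔ T ⊓ C := by rw [← sup_assoc, sup_inf_self]

section VectorSpace

variable {K E : Type*} [Field K] [AddCommGroup E] [Module K E]

-- The projections onto `B` and `D` of a decomposition `E = S ⊕ B ⊕ D` with `B ≤ T ≤ S ⊕ B`.
theorem Submodule.exists_adapted_projections (S T : Submodule K E) :
    ∃ πB πD : E →ₗ[K] E, (∀ x, x - πB x - πD x ∈ S) ∧ (∀ x, πB x ∈ T) ∧
      (∀ x ∈ S, πB x = 0 ∧ πD x = 0) ∧ ∀ y ∈ T, πD y = 0 := by
  obtain ⟨B, hBT, hSB, hSBT⟩ := exists_le_disjoint_sup_eq S T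
  obtain ⟨D, hD⟩ := Submodule.exists_isCompl (S ⊔ T)
  have hB : IsCompl B (S ⊔ D) :=
    hSB.symm.isCompl_sup_right_of_isCompl_sup_left (by rwa [sup_comm, hSBT])
  refine ⟨B.projection _ hB, D.projection _ hD.symm, fun x => ?_,
    fun x => hBT (projection_apply_mem hB x),
    fun x hx => ⟨projection_apply_of_mem_right hB (mem_sup_left hx),
      projection_apply_of_mem_right hD.symm (mem_sup_left hx)⟩,
    fun y hy => projection_apply_of_mem_right hD.symm (mem_sup_right hy)⟩
  have hx : x - D.projection _ hD.symm x ∈ S ⊔ B := by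
    rw [hSBT]
    exact sub_projection_mem hD.symm x
  obtain ⟨s, hs, b, hb, hsb⟩ := mem_sup.1 hx
  have hπB : B.projection _ hB x = b := by
    rw [← sub_add_cancel x (D.projection _ hD.symm x), map_add, ← hsb, map_add,
      projection_apply_of_mem_right hB (mem_sup_left hs), projection_apply_of_mem_left hB hb,
      projection_apply_of_mem_right hB (mem_sup_right (projection_apply_mem hD.symm x))]
    simp
  rw [hπB, sub_right_comm, ← hsb, add_sub_cancel_right]
  exact hs

variable {F : Type*} [AddCommGroup F] [Module K F]

theorem LinearMap.exists_comp_comp_eq_self (f : E →ₗ[K] F) : ∃ h : F →ₗ[K] E, f ∘ₗ h ∘ₗ f = f := by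
  obtain ⟨r, hr⟩ := f.rangeRestrict.exists_rightInverse_of_surjective f.range_rangeRestrict
  obtain ⟨h, hh⟩ := LinearMap.exists_extend r
  refine ⟨h, LinearMap.ext fun x => ?_⟩
  have hfx : h (f x) = r ⟨f x, mem_range_self f x⟩ := LinearMap.congr_fun hh ⟨f x, _⟩
  simpa [hfx] using congr_arg Subtype.val (LinearMap.congr_fun hr ⟨f x, mem_range_self f x⟩)

theorem LinearMap.exists_compl₁₂_eq {E' G M : Type*} [AddCommGroup E'] [Module K E']
    [AddCommGroup G] [Module K G] [AddCommGroup M] [Module K M]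
    (f : E →ₗ[K] F) (g : E' →ₗ[K] G) (b : E →ₗ[K] E' →ₗ[K] M)
    (hf : ∀ x, f x = 0 → b x = 0) (hg : ∀ x y, g y = 0 → b x y = 0) :
    ∃ β : F →ₗ[K] G →ₗ[K] M, β.compl₁₂ f g = b := by
  obtain ⟨h, hh⟩ := f.exists_comp_comp_eq_self
  obtain ⟨k, hk⟩ := g.exists_comp_comp_eq_self
  refine ⟨b.compl₁₂ h k, LinearMap.ext₂ fun x y => ?_⟩
  have hx : b (h (f x)) = b x := by
    rw [← sub_eq_zero, ← map_sub]
    exact hf _ (by simpa [sub_eq_zero] using LinearMap.congr_fun hh x)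
  have hy : b x (k (g y)) = b x y := by
    rw [← sub_eq_zero, ← map_sub]
    exact hg _ _ (by simpa [sub_eq_zero] using LinearMap.congr_fun hk y)
  simp [hx, hy]

theorem LinearMap.BilinForm.IsSymm.apply_eq_zero_of_forall_apply_self [NeZero (2 : K)]
    {q : LinearMap.BilinForm K E} (hq : q.IsSymm) {W : Submodule K E}
    (hW : ∀ x ∈ W, q x x = 0) {x y : E} (hx : x ∈ W) (hy : y ∈ W) : q x y = 0 := by
  rw [hq.polarization, hW _ (W.add_mem hx hy), hW x hx, hW y hy]
  simp

theorem LinearMap.BilinForm.IsSymm.exists_add_flip_eq [NeZero (2 : K)]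
    {q : LinearMap.BilinForm K E} (hq : q.IsSymm) {S T : Submodule K E} (hS : ∀ x ∈ S, ∀ y ∈ S, q x y = 0)
    (hT : ∀ x ∈ T, ∀ y ∈ T, q x y = 0) (hST : ∀ x ∈ S ⊓ T, q x = 0) :
    ∃ b : LinearMap.BilinForm K E,
      (∀ x ∈ S, b x = 0) ∧ (∀ x, ∀ y ∈ T, b x y = 0) ∧ b + b.flip = q := by
  obtain ⟨πB, πD, hsub, hB, hπS, hπT⟩ := S.exists_adapted_projections T
  refine ⟨q.compl₁₂ (πB + πD) LinearMap.id - q.compl₁₂ πD πB - (2 : K)⁻¹ • q.compl₁₂ πD πD,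
    fun x hx => ?_, fun x y hy => ?_, LinearMap.ext₂ fun x y => ?_⟩
  · ext y
    simp [(hπS x hx).1, (hπS x hx).2]
  · have hyS : y - πB y ∈ S := by simpa [hπT y hy] using hsub y
    have hrad : ∀ z, q z (y - πB y) = 0 := fun z => by
      rw [← hq.eq]
      exact LinearMap.congr_fun (hST _ ⟨hyS, T.sub_mem hy (hB y)⟩) z
    have hBB := hT _ (hB x) _ (hB y)
    simp only [map_sub] at hrad
    simp only [LinearMap.sub_apply, LinearMap.smul_apply, LinearMap.compl₁₂_apply,
      LinearMap.add_apply, LinearMap.id_apply, map_add, hπT y hy, map_zero, smul_eq_mul, mul_zero,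
      sub_zero]
    linear_combination hrad (πB x) + hrad (πD x) + hBB
  · have hSS := hS _ (hsub x) _ (hsub y)
    have hBB := hT _ (hB x) _ (hB y)
    simp only [map_sub, LinearMap.sub_apply] at hSS
    simp only [LinearMap.add_apply, LinearMap.sub_apply, LinearMap.smul_apply,
      LinearMap.BilinForm.flip_apply, LinearMap.compl₁₂_apply, LinearMap.id_apply, map_add,
      smul_eq_mul]
    have hsym := hq.eq
    have h2 : (2 : K)⁻¹ * 2 = 1 := inv_mul_cancel₀ two_ne_zero
    linear_combination -hSS + hBB + hsym (πB y) x + hsym (πD y) x - hsym (πD y) (πB x)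
      - (2 : K)⁻¹ * hsym (πD y) (πD x) - q (πD x) (πD y) * h2

theorem LinearMap.BilinForm.IsSymm.exists_compl₁₂_add_flip_eq_zero_iff [NeZero (2 : K)]
    {G : Type*} [AddCommGroup G] [Module K G] {q : LinearMap.BilinForm K E} (hq : q.IsSymm)
    (f : E →ₗ[K] F) (g : E →ₗ[K] G) :
    (∃ β : F →ₗ[K] G →ₗ[K] K, q + β.compl₁₂ f g + (β.compl₁₂ f g).flip = 0) ↔
      (∀ x, f x = 0 ∨ g x = 0 → q x x = 0) ∧ ∀ x, f x = 0 → g x = 0 → q x = 0 := by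
  constructor
  · rintro ⟨β, hβ⟩
    have h : ∀ x y, q x y + β (f x) (g y) + β (f y) (g x) = 0 := fun x y => by
      simpa using LinearMap.congr_fun₂ hβ x y
    refine ⟨fun x hx => ?_, fun x hf hg => LinearMap.ext fun y => ?_⟩
    · rcases hx with hx | hx <;> simpa [hx] using h x x
    · simpa [hf, hg] using h x y
  · rintro ⟨hiso, hrad⟩
    obtain ⟨b, hbf, hbg, hb⟩ := hq.exists_add_flip_eq (S := ker f) (T := ker g)
      (fun x hx y hy => hq.apply_eq_zero_of_forall_apply_self (fun z hz => hiso z (.inl hz)) hx hy)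
      (fun x hx y hy => hq.apply_eq_zero_of_forall_apply_self (fun z hz => hiso z (.inr hz)) hx hy)
      (fun x hx => hrad x hx.1 hx.2)
    obtain ⟨β, hβ⟩ := exists_compl₁₂_eq f g (-b) (fun x hx => by simp [hbf x hx])
      (fun x y hy => by simp [hbg x y hy])
    refine ⟨β, ?_⟩
    rw [hβ, ← hb]
    ext x y
    simp

end VectorSpace

theorem Matrix.toLinearMap₂'_transpose {R n m : Type*} [CommSemiring R] [Fintype n] [Fintype m]
    [DecidableEq n] [DecidableEq m] (M : Matrix n m R) :
    (toLinearMap₂' R Mᵀ : (m → R) →ₗ[R] (n → R) →ₗ[R] R) = (toLinearMap₂' R M).flip := by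
  ext x y
  simp [toLinearMap₂'_apply', dotProduct_comm]

theorem stmt_0 (m n p : ℕ) (U : Matrix (Fin m) (Fin n) ℝ)
    (V : Matrix (Fin p) (Fin n) ℝ) (Q : Matrix (Fin n) (Fin n) ℝ)
    (hQ : Q.IsSymm) :
    (∃ X : Matrix (Fin m) (Fin p) ℝ, Q + Uᵀ * X * V + Vᵀ * Xᵀ * U = 0) ↔
      ((∀ x : Fin n → ℝ, (U.mulVec x = 0 ∨ V.mulVec x = 0) →
          x ⬝ᵥ Q.mulVec x = 0) ∧
        (∀ x : Fin n → ℝ, U.mulVec x = 0 → V.mulVec x = 0 →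
          Q.mulVec x = 0)) := by
  set q : LinearMap.BilinForm ℝ (Fin n → ℝ) := toLinearMap₂' ℝ Q
  have hq : q.IsSymm := ⟨fun x y => by
    rw [← LinearMap.flip_apply (toLinearMap₂' ℝ Q), ← toLinearMap₂'_transpose, hQ.eq]⟩
  have hqx : ∀ x, q x = 0 ↔ Q *ᵥ x = 0 := fun x => by
    rw [LinearMap.ext_iff, ← dotProduct_eq_zero_iff]
    refine forall_congr' fun y => ?_
    rw [← hq.eq]
    simp [q, toLinearMap₂'_apply', dotProduct_comm]
  have hmat : ∀ X : Matrix (Fin m) (Fin p) ℝ, toLinearMap₂' ℝ (Q + Uᵀ * X * V + Vᵀ * Xᵀ * U) =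
      q + (toLinearMap₂' ℝ X).compl₁₂ (toLin' U) (toLin' V) +
        ((toLinearMap₂' ℝ X).compl₁₂ (toLin' U) (toLin' V)).flip := fun X => by
    rw [toLinearMap₂'_comp, ← toLinearMap₂'_transpose, map_add, map_add]
    simp [q, Matrix.mul_assoc]
  calc (∃ X : Matrix (Fin m) (Fin p) ℝ, Q + Uᵀ * X * V + Vᵀ * Xᵀ * U = 0)
      ↔ ∃ X : Matrix (Fin m) (Fin p) ℝ, q + (toLinearMap₂' ℝ X).compl₁₂ (toLin' U) (toLin' V) +
          ((toLinearMap₂' ℝ X).compl₁₂ (toLin' U) (toLin' V)).flip = 0 :=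
        exists_congr fun X => by rw [← hmat, map_eq_zero_iff _ (toLinearMap₂' ℝ).injective]
    _ ↔ ∃ β : (Fin m → ℝ) →ₗ[ℝ] (Fin p → ℝ) →ₗ[ℝ] ℝ, q + β.compl₁₂ (toLin' U) (toLin' V) +
          (β.compl₁₂ (toLin' U) (toLin' V)).flip = 0 :=
        by rw [(toLinearMap₂' ℝ).surjective.exists]
    _ ↔ _ := hq.exists_compl₁₂_add_flip_eq_zero_iff _ _
    _ ↔ _ := by simp [q, hqx, toLinearMap₂'_apply']
end

section
/- Let U be an m×n real matrix and Q a symmetric n×n real matrix. Then there exists a matrix X in R^{m×n} such that Q + Uᵀ X + Xᵀ U = 0 if and only if xᵀ Q x = 0 for all x in ker U. -/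
open Matrix

lemma polar {m n : ℕ} (U : Matrix (Fin m) (Fin n) ℝ) (Q : Matrix (Fin n) (Fin n) ℝ)
    (hQ : Q.IsSymm) (h : ∀ x : Fin n → ℝ, U.mulVec x = 0 → x ⬝ᵥ Q.mulVec x = 0)
    (x y : Fin n → ℝ) (hx : U.mulVec x = 0) (hy : U.mulVec y = 0) :
    x ⬝ᵥ Q.mulVec y = 0 := by
  have hxy := h (x + y) (by rw [mulVec_add, hx, hy, add_zero])
  have hx0 := h x hx
  have hy0 := h y hy
  have hsym : y ⬝ᵥ Q.mulVec x = x ⬝ᵥ Q.mulVec y := by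
    rw [dotProduct_mulVec, dotProduct_comm]
    nth_rewrite 1 [← hQ]
    rw [vecMul_transpose]
  rw [mulVec_add, dotProduct_add, add_dotProduct, add_dotProduct, hx0, hy0, hsym] at hxy
  linarith

lemma exists_pseudo {m n : ℕ} (U : Matrix (Fin m) (Fin n) ℝ) :
    ∃ V : Matrix (Fin n) (Fin m) ℝ, U * V * U = U := by
  set u : (Fin n → ℝ) →ₗ[ℝ] (Fin m → ℝ) := Matrix.mulVecLin U with hu
  obtain ⟨s, hs⟩ := u.rangeRestrict.exists_rightInverse_of_surjective u.range_rangeRestrict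
  obtain ⟨g, hg⟩ := s.exists_extend
  refine ⟨LinearMap.toMatrix' g, ?_⟩
  have hVy : ∀ y, (LinearMap.toMatrix' g).mulVec y = g y := by
    intro y
    have h2 : Matrix.toLin' (LinearMap.toMatrix' g) y = g y := by
      rw [Matrix.toLin'_toMatrix']
    rw [Matrix.toLin'_apply] at h2
    exact h2
  have hgx : ∀ x, g (u x) = s ⟨u x, LinearMap.mem_range_self u x⟩ := by
    intro x
    have := congrFun (congrArg DFunLike.coe hg) ⟨u x, LinearMap.mem_range_self u x⟩
    simpa using this
  have husy : ∀ y : LinearMap.range u, u (s y) = (y : Fin m → ℝ) := by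
    intro y
    have := congrFun (congrArg DFunLike.coe hs) y
    exact congrArg Subtype.val this
  have hmv : ∀ x, (U * LinearMap.toMatrix' g * U).mulVec x = U.mulVec x := by
    intro x
    rw [← Matrix.mulVec_mulVec, ← Matrix.mulVec_mulVec, hVy]
    have h1 : U.mulVec x = u x := rfl
    rw [h1, hgx x]
    have := husy ⟨u x, LinearMap.mem_range_self u x⟩
    exact this
  apply Matrix.toLin'.injective
  apply LinearMap.ext
  intro x
  rw [Matrix.toLin'_apply, Matrix.toLin'_apply]
  exact hmv x

theorem stmt_1 (m n : ℕ) (U : Matrix (Fin m) (Fin n) ℝ)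
    (Q : Matrix (Fin n) (Fin n) ℝ) (hQ : Q.IsSymm) :
    (∃ X : Matrix (Fin m) (Fin n) ℝ, Q + Uᵀ * X + Xᵀ * U = 0) ↔
      (∀ x : Fin n → ℝ, U.mulVec x = 0 → x ⬝ᵥ Q.mulVec x = 0) := by
  constructor
  · rintro ⟨X, hX⟩ x hx
    have h0 : x ⬝ᵥ (Q + Uᵀ * X + Xᵀ * U).mulVec x = 0 := by rw [hX]; simp
    have h1 : x ⬝ᵥ (Uᵀ * X).mulVec x = 0 := by
      rw [← Matrix.mulVec_mulVec, dotProduct_mulVec, vecMul_transpose, hx, zero_dotProduct]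
    have h2 : x ⬝ᵥ (Xᵀ * U).mulVec x = 0 := by
      rw [← Matrix.mulVec_mulVec, hx, Matrix.mulVec_zero, dotProduct_zero]
    rw [add_mulVec, add_mulVec, dotProduct_add, dotProduct_add, h1, h2] at h0
    linarith
  · intro h
    obtain ⟨V, hV⟩ := exists_pseudo U
    set P : Matrix (Fin n) (Fin n) ℝ := V * U with hP
    have hUP : U * P = U := by rw [hP, ← Matrix.mul_assoc, hV]
    set M : Matrix (Fin n) (Fin n) ℝ := Q - (1/2 : ℝ) • (Q * P) with hM
    refine ⟨-(Vᵀ * M), ?_⟩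
    have key : (1 - P)ᵀ * Q * (1 - P) = 0 := by
      ext i j
      have h1 : (((1 - P)ᵀ * Q * (1 - P) : Matrix (Fin n) (Fin n) ℝ)) i j
          = (fun k => (1 - P) k i) ⬝ᵥ Q.mulVec (fun k => (1 - P) k j) := by
        simp only [Matrix.mul_apply, dotProduct, Matrix.mulVec, Matrix.transpose_apply,
          Finset.mul_sum, Finset.sum_mul]
        rw [Finset.sum_comm]
        apply Finset.sum_congr rfl; intro k _
        apply Finset.sum_congr rfl; intro l _
        ring
      have hcol : ∀ j, U.mulVec (fun k => (1 - P) k j) = 0 := by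
        intro j
        have hz : U * (1 - P) = 0 := by rw [Matrix.mul_sub, Matrix.mul_one, hUP, sub_self]
        ext i
        have := congrFun (congrFun hz i) j
        simpa [Matrix.mulVec, dotProduct, Matrix.mul_apply] using this
      rw [h1, polar U Q hQ h _ _ (hcol i) (hcol j)]
      rfl
    have hPt : Uᵀ * Vᵀ = Pᵀ := by rw [hP, Matrix.transpose_mul]
    have hL : ∀ A : Matrix (Fin n) (Fin n) ℝ, Uᵀ * (Vᵀ * A) = Pᵀ * A := by
      intro A; rw [← Matrix.mul_assoc, hPt]
    have key2 : Q + Uᵀ * -(Vᵀ * M) + (-(Vᵀ * M))ᵀ * U = (1 - P)ᵀ * Q * (1 - P) := by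
      rw [hM]
      simp only [Matrix.transpose_neg, Matrix.transpose_mul, Matrix.transpose_sub,
        Matrix.transpose_smul, Matrix.transpose_transpose, Matrix.transpose_one,
        Matrix.mul_neg, Matrix.neg_mul, Matrix.mul_sub,
        Matrix.sub_mul, Matrix.mul_smul, Matrix.smul_mul, Matrix.mul_one, Matrix.one_mul,
        hQ.eq, Matrix.mul_assoc, hL, ← hP]
      module
    rw [key2, key]
end

section
/- Let U be an m×n real matrix and Q a symmetric n×n real matrix. Then there exists a symmetric matrix X in S^m such that Q + Uᵀ X U = 0 if and only if ker U ⊆ ker Q. -/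
open Matrix

theorem stmt_2 (m n : ℕ) (U : Matrix (Fin m) (Fin n) ℝ)
    (Q : Matrix (Fin n) (Fin n) ℝ) (hQ : Q.IsSymm) :
    (∃ X : Matrix (Fin m) (Fin m) ℝ, X.IsSymm ∧ Q + Uᵀ * X * U = 0) ↔
      (∀ x : Fin n → ℝ, U.mulVec x = 0 → Q.mulVec x = 0) := by
  constructor
  · rintro ⟨X, hX, hEq⟩ x hx
    have h1 := congrArg (fun M => M.mulVec x) hEq
    simp only [Matrix.add_mulVec, Matrix.zero_mulVec] at h1
    have h2 : (Uᵀ * X * U).mulVec x = 0 := by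
      rw [← Matrix.mulVec_mulVec, hx, Matrix.mulVec_zero]
    rw [h2, add_zero] at h1
    exact h1
  · intro h
    set f := Matrix.toLin' U with hf
    obtain ⟨q, hq⟩ := Submodule.exists_isCompl (LinearMap.range f)
    set π := (LinearMap.range f).linearProjOfIsCompl q hq with hπdef
    obtain ⟨g, hg⟩ := f.rangeRestrict.exists_rightInverse_of_surjective
      (LinearMap.range_eq_top.2 f.surjective_rangeRestrict)
    set S := LinearMap.toMatrix' (g.comp π) with hS
    have hUSU : U * S * U = U := by
      apply Matrix.toLin'.injective
      refine LinearMap.ext fun x => ?_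
      have hxmem : f x ∈ LinearMap.range f := LinearMap.mem_range_self f x
      have hπ : π (f x) = ⟨f x, hxmem⟩ :=
        Submodule.linearProjOfIsCompl_apply_left hq ⟨f x, hxmem⟩
      have hgy : f (g ⟨f x, hxmem⟩) = f x := by
        have h3 := congrArg (fun (t : LinearMap.range f) => (t : Fin m → ℝ))
          (LinearMap.congr_fun hg ⟨f x, hxmem⟩)
        simpa [LinearMap.rangeRestrict] using h3
      simp [Matrix.toLin'_mul, hS, Matrix.toLin'_toMatrix', hπ, hgy, ← hf]
    have hQmul : ∀ M : Matrix (Fin n) (Fin n) ℝ, U * M = 0 → Q * M = 0 := by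
      intro M hM
      ext i j
      have hcol : U.mulVec (fun k => M k j) = 0 := by
        funext i'
        have h4 := congrFun (congrFun hM i') j
        simpa [Matrix.mulVec, Matrix.mul_apply, dotProduct] using h4
      have h5 := congrFun (h _ hcol) i
      simpa [Matrix.mulVec, Matrix.mul_apply, dotProduct] using h5
    have hQP : Q * (S * U) = Q := by
      have h0 : U * (S * U - 1) = 0 := by
        rw [Matrix.mul_sub, Matrix.mul_one, ← Matrix.mul_assoc, hUSU, sub_self]
      have h6 := hQmul _ h0
      rwa [Matrix.mul_sub, Matrix.mul_one, sub_eq_zero] at h6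
    refine ⟨-(Sᵀ * Q * S), ?_, ?_⟩
    · show (-(Sᵀ * Q * S))ᵀ = -(Sᵀ * Q * S)
      simp [Matrix.transpose_mul, Matrix.mul_assoc, hQ.eq]
    · have key : Uᵀ * (Sᵀ * Q * S) * U = Q := by
        have h7 : Uᵀ * (Sᵀ * Q * S) * U = (S * U)ᵀ * (Q * (S * U)) := by
          simp [Matrix.transpose_mul, Matrix.mul_assoc]
        rw [h7, hQP]
        have h8 : (S * U)ᵀ * Q = (Qᵀ * (S * U))ᵀ := by
          simp [Matrix.transpose_mul]
        rw [h8, hQ.eq, hQP, hQ.eq]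
      rw [Matrix.mul_neg, Matrix.neg_mul, key, add_neg_cancel]
end

section
/- Let P_i, P_j be symmetric n×n matrices, C ∈ R^{m×n}, and H ∈ R^{k×m}. Then there exists a matrix Γ ∈ R^{k×n} such that P_i - P_j + (HC)ᵀ Γ + Γᵀ (HC) = 0 if and only if xᵀ (P_i - P_j) x = 0 for all x with HCx = 0. -/
/-!
Let `Q = Pᵢ - Pⱼ` and `U = HC`. Choose a generalized inverse `M` of `U` (`UMU = U`) and put
`S = MU`, so that `T = 1 - S` maps into `ker U`. Since `Q` is symmetric, the quadratic form of
`Q` vanishing on `ker U` forces its bilinear form to vanish there, hence `TᵀQT = 0`. Expanding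
`Q = (S + T)ᵀQ(S + T)` then gives `Q = SᵀA + AᵀS` with `A = ½QS + QT`, and `Γ = -MᵀA` works
because `Sᵀ = UᵀMᵀ`. Conversely, `xᵀ(UᵀΓ + ΓᵀU)x = 2 (Ux)ᵀ(Γx)` vanishes on `ker U`.
-/

open Matrix

theorem LinearMap.exists_comp_comp_eq_self_s6 {K V W : Type*} [DivisionRing K] [AddCommGroup V]
    [Module K V] [AddCommGroup W] [Module K W] (f : V →ₗ[K] W) :
    ∃ g : W →ₗ[K] V, f ∘ₗ g ∘ₗ f = f := by
  obtain ⟨r, hr⟩ := f.rangeRestrict.exists_rightInverse_of_surjective f.range_rangeRestrict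
  obtain ⟨l, hl⟩ := f.range.subtype.exists_leftInverse_of_injective f.range.ker_subtype
  refine ⟨r ∘ₗ l, LinearMap.ext fun x => ?_⟩
  have hlf : l (f x) = f.rangeRestrict x := congr($hl (f.rangeRestrict x))
  simpa [hlf] using congr(($hr (f.rangeRestrict x) : W))

namespace Matrix

variable {K l m n : Type*} [Fintype l] [Fintype m] [Fintype n]

theorem exists_mul_mul_eq_self [Field K] [DecidableEq m] [DecidableEq n] (U : Matrix m n K) :
    ∃ M : Matrix n m K, U * M * U = U := by
  obtain ⟨g, hg⟩ := (toLin' U).exists_comp_comp_eq_self_s6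
  refine ⟨LinearMap.toMatrix' g, toLin'.injective ?_⟩
  simpa [toLin'_mul, LinearMap.comp_assoc] using hg

theorem IsSymm.dotProduct_mulVec_eq_zero [Field K] [NeZero (2 : K)] {Q : Matrix n n K}
    (hQ : Q.IsSymm) {p : Submodule K (n → K)} (hp : ∀ x ∈ p, x ⬝ᵥ Q *ᵥ x = 0)
    {x y : n → K} (hx : x ∈ p) (hy : y ∈ p) : x ⬝ᵥ Q *ᵥ y = 0 := by
  have hyx : y ⬝ᵥ Q *ᵥ x = x ⬝ᵥ Q *ᵥ y := by
    rw [← dotProduct_transpose_mulVec, hQ.eq]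
  have hsum := hp (x + y) (add_mem hx hy)
  rw [mulVec_add, dotProduct_add, add_dotProduct, add_dotProduct, hp x hx, hp y hy, hyx,
    zero_add, add_zero, ← two_mul] at hsum
  exact (mul_eq_zero.1 hsum).resolve_left two_ne_zero

theorem transpose_mul_mul_eq_zero [CommRing K] [DecidableEq l] {Q : Matrix n n K}
    {T : Matrix n l K} (hT : ∀ x y, T *ᵥ x ⬝ᵥ Q *ᵥ (T *ᵥ y) = 0) : Tᵀ * Q * T = 0 := by
  ext i j
  rw [← toBilin'_single (Tᵀ * Q * T), toBilin'_apply', ← mulVec_mulVec, ← mulVec_mulVec,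
    dotProduct_transpose_mulVec, dotProduct_comm, hT]
  rfl

theorem IsSymm.transpose_mul_add_transpose_mul_add_eq_self [Field K] [NeZero (2 : K)]
    [DecidableEq n] {Q : Matrix n n K} (hQ : Q.IsSymm) (S : Matrix n n K) :
    Sᵀ * ((2⁻¹ : K) • (Q * S) + Q * (1 - S)) + ((2⁻¹ : K) • (Q * S) + Q * (1 - S))ᵀ * S
      + (1 - S)ᵀ * Q * (1 - S) = Q := by
  simp only [transpose_add, transpose_smul, transpose_mul, transpose_sub, transpose_one, hQ.eq,
    mul_add, add_mul, mul_sub, sub_mul, mul_one, one_mul, mul_smul_comm, smul_mul_assoc,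
    mul_assoc]
  match_scalars <;> field_simp <;> ring

theorem dotProduct_mulVec_eq_zero_of_add_transpose_mul_add_eq_zero [CommRing K]
    {Q : Matrix n n K} {U Γ : Matrix m n K} (hΓ : Q + Uᵀ * Γ + Γᵀ * U = 0) {x : n → K}
    (hx : U *ᵥ x = 0) : x ⬝ᵥ Q *ᵥ x = 0 := by
  have hQ : Q = -(Uᵀ * Γ) - Γᵀ * U := by
    linear_combination (norm := abel) hΓ
  rw [hQ, sub_mulVec, neg_mulVec, ← mulVec_mulVec, ← mulVec_mulVec, dotProduct_sub,
    dotProduct_neg, dotProduct_transpose_mulVec, dotProduct_transpose_mulVec, hx]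
  simp

theorem exists_add_transpose_mul_add_eq_zero [Field K] [NeZero (2 : K)] [DecidableEq m]
    [DecidableEq n] {Q : Matrix n n K} (hQ : Q.IsSymm) (U : Matrix m n K)
    (hker : ∀ x, U *ᵥ x = 0 → x ⬝ᵥ Q *ᵥ x = 0) :
    ∃ Γ : Matrix m n K, Q + Uᵀ * Γ + Γᵀ * U = 0 := by
  obtain ⟨M, hM⟩ := U.exists_mul_mul_eq_self
  have hUT : U * (1 - M * U) = 0 := by
    rw [Matrix.mul_sub, Matrix.mul_one, ← Matrix.mul_assoc, hM, sub_self]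
  have hT_ker : ∀ x, (1 - M * U) *ᵥ x ∈ LinearMap.ker U.mulVecLin := fun x => by
    rw [LinearMap.mem_ker, mulVecLin_apply, mulVec_mulVec, hUT, zero_mulVec]
  have hT : (1 - M * U)ᵀ * Q * (1 - M * U) = 0 := transpose_mul_mul_eq_zero fun x y =>
    hQ.dotProduct_mulVec_eq_zero hker (hT_ker x) (hT_ker y)
  have hQ_eq := hQ.transpose_mul_add_transpose_mul_add_eq_self (M * U)
  set A := (2⁻¹ : K) • (Q * (M * U)) + Q * (1 - M * U)
  refine ⟨-(Mᵀ * A), ?_⟩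
  rw [hT, add_zero, transpose_mul, Matrix.mul_assoc] at hQ_eq
  rw [Matrix.mul_neg, transpose_neg, Matrix.neg_mul, transpose_mul, transpose_transpose,
    Matrix.mul_assoc]
  nth_rewrite 1 [← hQ_eq]
  abel

end Matrix

theorem stmt_6 (n m k : ℕ) (Pi Pj : Matrix (Fin n) (Fin n) ℝ)
    (hPi : Pi.IsSymm) (hPj : Pj.IsSymm)
    (C : Matrix (Fin m) (Fin n) ℝ) (H : Matrix (Fin k) (Fin m) ℝ) :
    (∃ Γ : Matrix (Fin k) (Fin n) ℝ,
        Pi - Pj + (H * C)ᵀ * Γ + Γᵀ * (H * C) = 0) ↔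
      (∀ x : Fin n → ℝ, (H * C).mulVec x = 0 →
        x ⬝ᵥ (Pi - Pj).mulVec x = 0) :=
  ⟨fun ⟨_, hΓ⟩ _ hx => dotProduct_mulVec_eq_zero_of_add_transpose_mul_add_eq_zero hΓ hx,
    exists_add_transpose_mul_add_eq_zero (hPi.sub hPj) (H * C)⟩
end

section
/- There exist matrices U, V, Q (with Q symmetric) such that xᵀ Q x = 0 for all x ∈ ker U ∪ ker V, yet there is no matrix X with Q + Uᵀ X V + Vᵀ Xᵀ U = 0. In particular, condition (L1.2) alone does not imply (L1.1) in the equality projection lemma. -/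
open Matrix

theorem stmt_19 :
    ∃ (m n p : ℕ) (U : Matrix (Fin m) (Fin n) ℝ)
      (V : Matrix (Fin p) (Fin n) ℝ) (Q : Matrix (Fin n) (Fin n) ℝ),
      Q.IsSymm ∧
        (∀ x : Fin n → ℝ, (U.mulVec x = 0 ∨ V.mulVec x = 0) →
          x ⬝ᵥ Q.mulVec x = 0) ∧
        ¬ ∃ X : Matrix (Fin m) (Fin p) ℝ,
            Q + Uᵀ * X * V + Vᵀ * Xᵀ * U = 0 := by
  refine ⟨1, 2, 1, !![1, 0], !![1, 0], !![0, 1; 1, 0], ?_, ?_, ?_⟩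
  · ext i j; fin_cases i <;> fin_cases j <;> simp [Matrix.IsSymm, transpose]
  · intro x hx
    have h0 : x 0 = 0 := by
      rcases hx with h | h <;>
      · have := congrFun h 0
        simpa [mulVec, dotProduct, Fin.sum_univ_two] using this
    simp [dotProduct, mulVec, Fin.sum_univ_two, h0]
  · rintro ⟨X, hX⟩
    have := congrFun (congrFun hX 0) 1
    simp [Matrix.mul_apply, Fin.sum_univ_two, Fin.sum_univ_one] at this
end
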